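/- arXiv:1912.06315 — 3 statements merged into one kernel-verified Lean document; each statement's English description precedes it below -/
import Mathlib

section
/- Let A be a finite alphabet, F a set of finite words over A, and X = X(A, F) the induced two-sided subshift. If there exist a real number c > 1/|A| and a positive integer k < |A| such that ∑_{v ∈ F} c^{|v|} < c·(|A| − k + 1) − 1, then h(X) ≥ log k. -/
open MeasureTheory Filter Set
open scoped ENNReal

namespace SlowForbidden

/-- The left shift map on the two-sided full shift over the alphabet `A`. -/
def shiftMap (A : Type*) : (ℤ → A) → (ℤ → A) := fun x n => x (n + 1)

/-- The word `w` occurs as a subword of the biinfinite sequence `x`. -/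
def OccursIn {A : Type*} (w : List A) (x : ℤ → A) : Prop :=
  ∃ n : ℤ, ∀ i : Fin w.length, x (n + (i : ℕ)) = w.get i

/-- `L_n(X)`: the set of words of length `n` occurring in points of `X`. -/
def lang {A : Type*} (X : Set (ℤ → A)) (n : ℕ) : Set (List A) :=
  {w | w.length = n ∧ ∃ x ∈ X, OccursIn w x}

/-- `L(X)`: the set of all (nonempty) words occurring in points of `X`. -/
def langAll {A : Type*} (X : Set (ℤ → A)) : Set (List A) :=
  {w | w ≠ [] ∧ ∃ x ∈ X, OccursIn w x}

/-- The cylinder set `[w] = {x : x_1 ⋯ x_n = w}`. -/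
def cyl {A : Type*} (w : List A) : Set (ℤ → A) :=
  {x | ∀ i : Fin w.length, x (1 + (i : ℕ)) = w.get i}

/-- `μ(W) = μ(⋃_{w ∈ W} [w])` for a collection `W` of words. -/
noncomputable def measOfWords {A : Type*} [MeasurableSpace A] (μ : Measure (ℤ → A))
    (W : Set (List A)) : ℝ≥0∞ :=
  μ (⋃ w ∈ W, cyl w)

/-- A set `S ⊆ ℕ` is syndetic if some bound `N` works for all gaps. -/
def Syndetic (S : Set ℕ) : Prop :=
  ∃ N : ℕ, 0 < N ∧ ∀ k : ℕ, ∃ m ∈ S, k ≤ m ∧ m < k + N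

/-- The topological entropy of `X` equals `h`:
`h = lim_n (1/n) log |L_n(X)|`. -/
def entropyIs {A : Type*} (X : Set (ℤ → A)) (h : ℝ) : Prop :=
  Tendsto (fun n : ℕ => Real.log ((lang X n).ncard : ℝ) / n) atTop (nhds h)

/-- The `n`-th entropy sum `∑_{w ∈ A^n} -μ([w]) log μ([w])`. -/
noncomputable def measEntropySum {A : Type*} [Fintype A] [MeasurableSpace A]
    (μ : Measure (ℤ → A)) (n : ℕ) : ℝ :=
  ∑ w : Fin n → A, Real.negMulLog (μ (cyl (List.ofFn w))).toReal

/-- The measure-theoretic entropy of `μ` equals `h`. -/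
def measEntropyIs {A : Type*} [Fintype A] [MeasurableSpace A]
    (μ : Measure (ℤ → A)) (h : ℝ) : Prop :=
  Tendsto (fun n : ℕ => measEntropySum μ n / n) atTop (nhds h)

/-- `μ` is invariant under the shift map. -/
def ShiftInvariant {A : Type*} [MeasurableSpace A] (μ : Measure (ℤ → A)) : Prop :=
  μ.map (shiftMap A) = μ

/-- `μ` is a measure of maximal entropy on `X`, where `h` is the topological
entropy of `X`: a shift-invariant Borel probability measure with `μ(X) = 1` and `h(μ) = h`. -/
def IsMME {A : Type*} [Fintype A] [MeasurableSpace A] (X : Set (ℤ → A)) (h : ℝ)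
    (μ : Measure (ℤ → A)) : Prop :=
  IsProbabilityMeasure μ ∧ ShiftInvariant μ ∧ μ X = 1 ∧ measEntropyIs μ h

/-- `μ` is ergodic for the shift: every invariant measurable set is trivial. -/
def IsErgodicShift {A : Type*} [MeasurableSpace A] (μ : Measure (ℤ → A)) : Prop :=
  ∀ s : Set (ℤ → A), MeasurableSet s → μ (symmDiff s (shiftMap A ⁻¹' s)) = 0 →
    μ s = 0 ∨ μ s = 1

/-- The subshift induced by the forbidden list `F`. -/
def XAF {A : Type*} (F : Set (List A)) : Set (ℤ → A) :=
  {x | ∀ w ∈ F, ¬ OccursIn w x}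

/-- `|F_n|`: the number of words of length `n` in `F`. -/
noncomputable def cardLen {A : Type*} (F : Set (List A)) (n : ℕ) : ℕ :=
  (F ∩ {w | w.length = n}).ncard

/-- Heavy subwords: subwords of some `w ∈ F` of length at least `|w|/3`. -/
def Heavy {A : Type*} (F : Set (List A)) : Set (List A) :=
  {u | ∃ w ∈ F, u <:+: w ∧ w.length ≤ 3 * u.length}

/-- Heavy′ subwords: subwords of some `w ∈ F` of length at least `|w|/4`. -/
def Heavy' {A : Type*} (F : Set (List A)) : Set (List A) :=
  {u | ∃ w ∈ F, u <:+: w ∧ w.length ≤ 4 * u.length}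

/-- `G`: words of `L(X)` with no heavy subword as a prefix or as a suffix. -/
def goodWords {A : Type*} (X : Set (ℤ → A)) (F : Set (List A)) : Set (List A) :=
  {w | w ∈ langAll X ∧ (∀ u ∈ Heavy F, ¬ u <+: w) ∧ (∀ u ∈ Heavy F, ¬ u <:+ w)}

/-- `G′`: words of `L(X)` with no heavy′ subword as a prefix or as a suffix. -/
def goodWords' {A : Type*} (X : Set (ℤ → A)) (F : Set (List A)) : Set (List A) :=
  {w | w ∈ langAll X ∧ (∀ u ∈ Heavy' F, ¬ u <+: w) ∧ (∀ u ∈ Heavy' F, ¬ u <:+ w)}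

/-- The Kolmogorov property for a shift-invariant measure `μ` on the full shift. -/
def HasKProperty {A : Type*} [MeasurableSpace A] (μ : Measure (ℤ → A)) : Prop :=
  ∃ K : MeasurableSpace (ℤ → A),
    K ≤ (inferInstance : MeasurableSpace (ℤ → A)) ∧
    K ≤ MeasurableSpace.map (shiftMap A) K ∧
    (∀ s : Set (ℤ → A), MeasurableSet s →
      ∃ t : Set (ℤ → A),
        MeasurableSet[⨆ n : ℕ, MeasurableSpace.map ((shiftMap A)^[n]) K] t ∧
        μ (symmDiff s t) = 0) ∧
    (∀ s : Set (ℤ → A),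
      (∀ n : ℕ, MeasurableSet[MeasurableSpace.map ((shiftMap A)^[n]) K] s) →
        μ s = 0 ∨ μ s = 1)

/-!
Miller's potential argument. For a word `u` avoiding `F`, weigh each partial occurrence of a
forbidden word `v` at the end of `u` by `c ^ (number of letters of v still missing)`; the empty
word has potential at most `S = ∑_{v ∈ F} c ^ |v|`. While the potential stays at most `S + 1`,
a letter `a` is bad if `u a` ends with a forbidden word or if the partial occurrences continued
by `a` weigh more than `1`. Each bad letter costs `c` of the budget `S + 1 < c (|A| - k + 1)`,
so at least `k` letters are good, and there are at least `k ^ n` admissible words of length `n`.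

The words of length `m` extendable by `t` letters on both sides then number at least
`k ^ (m + 2t) / |A| ^ (2t)` and are submultiplicative in `m`, hence at least `k ^ m` for every
`t`. This decreasing family stabilizes, and by compactness of `A ^ ℤ` a word extendable for all
`t` occurs in a point of `X(A, F)`; so `|L_m(X)| ≥ k ^ m`.
-/

open scoped Classical

variable {A : Type}

lemma append_singleton_suffix_append_singleton_iff {s u : List A} {a b : A} :
    s ++ [b] <:+ u ++ [a] ↔ s <:+ u ∧ b = a := by
  simp [List.suffix_concat_iff, List.append_singleton_inj, and_comm]

def Admissible (F : Set (List A)) (u : List A) : Prop := ∀ w ∈ F, ¬ w <:+: u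

lemma Admissible.of_infix {F : Set (List A)} {u v : List A} (hu : Admissible F u)
    (hvu : v <:+: u) : Admissible F v :=
  fun w hw hwv => hu w hw (hwv.trans hvu)

lemma admissible_nil {F : Set (List A)} (hF : [] ∉ F) : Admissible F [] := by
  intro w hw hwi
  rw [List.eq_nil_of_infix_nil hwi] at hw
  exact hF hw

lemma ne_nil_of_mem {F : Set (List A)} {v : List A} (hF : [] ∉ F) (hv : v ∈ F) : v ≠ [] :=
  fun h => hF (h ▸ hv)

section Words

variable [Fintype A]

variable (A) in
def wordsOfLength (n : ℕ) : Finset (List A) :=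
  (Finset.univ : Finset (List.Vector A n)).map
    ⟨List.Vector.toList, List.Vector.toList_injective⟩

lemma mem_wordsOfLength {n : ℕ} {u : List A} : u ∈ wordsOfLength A n ↔ u.length = n :=
  ⟨fun h => by obtain ⟨v, -, rfl⟩ := Finset.mem_map.mp h; exact v.toList_length,
    fun h => Finset.mem_map.mpr ⟨⟨u, h⟩, Finset.mem_univ _, rfl⟩⟩

lemma card_wordsOfLength (n : ℕ) : (wordsOfLength A n).card = Fintype.card A ^ n := by
  rw [wordsOfLength, Finset.card_map, Finset.card_univ, card_vector]

lemma pow_le_card_filter_wordsOfLength {P : List A → Prop} [DecidablePred P] {k : ℕ}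
    (hnil : P []) (hstep : ∀ u, P u → ∃ s : Finset A, k ≤ s.card ∧ ∀ a ∈ s, P (u ++ [a]))
    (n : ℕ) : k ^ n ≤ ((wordsOfLength A n).filter P).card := by
  choose! s hs_card hs_mem using hstep
  induction n with
  | zero =>
    have : [] ∈ (wordsOfLength A 0).filter P := by simp [mem_wordsOfLength, hnil]
    simpa using Finset.card_pos.mpr ⟨_, this⟩
  | succ n ih =>
    set W := (wordsOfLength A n).filter P
    calc k ^ (n + 1) = k ^ n * k := pow_succ k n
      _ ≤ W.card * k := Nat.mul_le_mul_right k ih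
      _ = ∑ _u ∈ W, k := by rw [Finset.sum_const, smul_eq_mul]
      _ ≤ ∑ u ∈ W, (s u).card :=
          Finset.sum_le_sum fun u hu => hs_card u (Finset.mem_filter.mp hu).2
      _ = (W.sigma s).card := (Finset.card_sigma _ _).symm
      _ ≤ _ := Finset.card_le_card_of_injOn (fun p => p.1 ++ [p.2]) ?_ ?_
    · rintro ⟨u, a⟩ hua
      simp only [Finset.coe_sigma, Set.mem_sigma_iff, Finset.mem_coe, W, Finset.mem_filter,
        mem_wordsOfLength] at hua ⊢
      exact ⟨by simp [hua.1.1], hs_mem u hua.1.2 a hua.2⟩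
    · rintro ⟨u, a⟩ - ⟨v, b⟩ - h
      obtain ⟨rfl, rfl⟩ := List.append_singleton_inj.mp h
      rfl

end Words

section Potential

variable (x : ℝ≥0∞)

/-- A proper prefix `v.take i` of `v` that ends `u` is a partial occurrence of `v` at the end
of `u`; it is weighted by `x` to the number of letters still missing. -/
noncomputable def overlapWeight (u v : List A) : ℝ≥0∞ :=
  ∑ i ∈ Finset.range v.length, if v.take i <:+ u then x ^ (v.length - i) else 0

noncomputable def extendedOverlapWeight (a : A) (u v : List A) : ℝ≥0∞ :=
  ∑ j ∈ Finset.range (v.length - 1),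
    if v.take (j + 1) <:+ u ++ [a] then x ^ (v.length - (j + 1)) else 0

noncomputable def oneShortWeight (u v : List A) : ℝ≥0∞ :=
  if v.dropLast <:+ u then x else 0

lemma overlapWeight_nil_le (v : List A) : overlapWeight x [] v ≤ x ^ v.length := by
  rcases v.eq_nil_or_concat' with rfl | ⟨w, b, rfl⟩
  · simp [overlapWeight]
  rw [overlapWeight, List.length_append, List.length_singleton, Finset.sum_range_succ']
  simp

lemma overlapWeight_append_singleton {v : List A} (hv : v ≠ []) (u : List A) (a : A) :
    overlapWeight x (u ++ [a]) v = x ^ v.length + extendedOverlapWeight x a u v := by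
  obtain ⟨n, hn⟩ : ∃ n, v.length = n + 1 :=
    Nat.exists_eq_add_one_of_ne_zero (by simpa using hv)
  rw [overlapWeight, extendedOverlapWeight, hn, Finset.sum_range_succ', add_comm]
  simp

variable (F : Set (List A))

noncomputable def forbiddenWeight : ℝ≥0∞ := ∑' v : F, x ^ (v : List A).length

noncomputable def potential (u : List A) : ℝ≥0∞ := ∑' v : F, overlapWeight x u v

variable {F}

lemma potential_nil_le : potential x F [] ≤ forbiddenWeight x F :=
  ENNReal.tsum_le_tsum fun v => overlapWeight_nil_le x (v : List A)

lemma potential_append_singleton (hF : [] ∉ F) (u : List A) (a : A) :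
    potential x F (u ++ [a]) = forbiddenWeight x F + ∑' v : F, extendedOverlapWeight x a u v := by
  rw [potential, forbiddenWeight, ← ENNReal.tsum_add]
  exact tsum_congr fun v => overlapWeight_append_singleton x (ne_nil_of_mem hF v.2) u a

lemma exists_oneShort_of_not_admissible (hF : [] ∉ F) {u : List A} (hu : Admissible F u) {a : A}
    (ha : ¬ Admissible F (u ++ [a])) :
    ∃ v : F, (v : List A).dropLast <:+ u ∧ (v : List A).getLast? = some a := by
  simp only [Admissible, not_forall, not_not] at ha
  obtain ⟨w, hw, hwu⟩ := ha
  rcases List.infix_concat_iff.mp hwu with hsuff | hinf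
  · rcases List.suffix_concat_iff.mp hsuff with rfl | ⟨t, rfl, ht⟩
    · exact absurd hw hF
    · exact ⟨⟨t ++ [a], hw⟩, by simpa using ht, by simp⟩
  · exact absurd hinf (hu w hw)

variable [Fintype A]

lemma overlapWeight_eq {v : List A} (hv : v ≠ []) (u : List A) :
    overlapWeight x u v = x * ∑ a, extendedOverlapWeight x a u v + oneShortWeight x u v := by
  obtain ⟨n, hn⟩ : ∃ n, v.length = n + 1 :=
    Nat.exists_eq_add_one_of_ne_zero (by simpa using hv)
  have hext : ∀ j < n, ∑ a, (if v.take (j + 1) <:+ u ++ [a] then x ^ (n - j) else 0) =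
      if v.take j <:+ u then x ^ (n - j) else 0 := by
    intro j hj
    have htake : v.take (j + 1) = v.take j ++ [v[j]] := List.take_succ_eq_append_getElem (by omega)
    simp only [htake, append_singleton_suffix_append_singleton_iff, ite_and]
    by_cases h : v.take j <:+ u <;> simp [h]
  simp only [overlapWeight, extendedOverlapWeight, oneShortWeight, hn, Finset.sum_range_succ,
    List.dropLast_eq_take, Nat.add_sub_cancel]
  rw [Finset.sum_comm, Finset.mul_sum]
  congr 1
  · refine Finset.sum_congr rfl fun j hj => ?_
    rw [Finset.mem_range] at hj
    rw [show n + 1 - (j + 1) = n - j by omega, hext j hj, mul_ite, mul_zero, ← pow_succ',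
      show n - j + 1 = n + 1 - j by omega]
  · simp

lemma potential_eq (hF : [] ∉ F) (u : List A) :
    potential x F u = x * ∑ a, ∑' v : F, extendedOverlapWeight x a u v +
      ∑' v : F, oneShortWeight x u v := by
  rw [potential, tsum_congr fun v => overlapWeight_eq x (ne_nil_of_mem hF v.2) u,
    ENNReal.tsum_add, ENNReal.tsum_mul_left, Summable.tsum_finsetSum fun a _ => ENNReal.summable]

/-- Each letter that completes a forbidden word at the end of `u` is the last letter of a
forbidden word one letter short of ending `u`, and distinct letters give distinct words. -/
lemma mul_card_not_admissible_le (hF : [] ∉ F) {u : List A} (hu : Admissible F u) :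
    x * (Finset.univ.filter fun a => ¬ Admissible F (u ++ [a])).card ≤
      ∑' v : F, oneShortWeight x u v := by
  choose g hg_short hg_last using
    fun a : {a // ¬ Admissible F (u ++ [a])} => exists_oneShort_of_not_admissible hF hu a.2
  have hg : Function.Injective g := fun a b hab =>
    Subtype.ext (Option.some_injective _ ((hg_last a).symm.trans (hab ▸ hg_last b)))
  calc x * (Finset.univ.filter fun a => ¬ Admissible F (u ++ [a])).card
      = ∑' a, oneShortWeight x u (g a) := by
        simp [oneShortWeight, hg_short, ← Fintype.card_subtype, mul_comm]
    _ ≤ ∑' v : F, oneShortWeight x u v :=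
        ENNReal.tsum_comp_le_tsum_of_injective hg fun v => oneShortWeight x u v

lemma exists_extensions (hF : [] ∉ F) {k : ℕ} (hkA : k ≤ Fintype.card A)
    (hbound : forbiddenWeight x F + 1 < x * (Fintype.card A - k + 1 : ℕ))
    {u : List A} (hu : Admissible F u) (hpot : potential x F u ≤ forbiddenWeight x F + 1) :
    ∃ s : Finset A, k ≤ s.card ∧ ∀ a ∈ s,
      Admissible F (u ++ [a]) ∧ potential x F (u ++ [a]) ≤ forbiddenWeight x F + 1 := by
  set Q : A → ℝ≥0∞ := fun a => ∑' v : F, extendedOverlapWeight x a u v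
  set blocked := Finset.univ.filter fun a => ¬ Admissible F (u ++ [a])
  set heavy := Finset.univ.filter fun a => 1 < Q a
  have hheavy : x * heavy.card ≤ x * ∑ a, Q a := by
    gcongr
    calc (heavy.card : ℝ≥0∞) = ∑ a ∈ heavy, 1 := by simp
      _ ≤ ∑ a ∈ heavy, Q a := Finset.sum_le_sum fun a ha => (Finset.mem_filter.mp ha).2.le
      _ ≤ ∑ a, Q a := Finset.sum_le_sum_of_subset (Finset.subset_univ heavy)
  have hbad : (blocked ∪ heavy).card < Fintype.card A - k + 1 := by
    have : x * (blocked ∪ heavy).card < x * (Fintype.card A - k + 1 : ℕ) := calc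
      x * (blocked ∪ heavy).card ≤ x * blocked.card + x * heavy.card := by
          rw [← mul_add]; gcongr; exact_mod_cast Finset.card_union_le blocked heavy
      _ ≤ potential x F u := by
          rw [potential_eq x hF u, add_comm]
          exact add_le_add hheavy (mul_card_not_admissible_le x hF hu)
      _ ≤ forbiddenWeight x F + 1 := hpot
      _ < _ := hbound
    exact_mod_cast lt_of_mul_lt_mul_left' this
  refine ⟨Finset.univ \ (blocked ∪ heavy), ?_, fun a ha => ?_⟩
  · rw [Finset.card_sdiff_of_subset (Finset.subset_univ _), Finset.card_univ]
    omega
  · simp only [Finset.mem_sdiff, Finset.mem_union, Finset.mem_filter, blocked, heavy,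
      Finset.mem_univ, true_and, not_or, not_not, not_lt] at ha
    refine ⟨ha.1, ?_⟩
    rw [potential_append_singleton x hF]
    exact add_le_add le_rfl ha.2

lemma pow_le_card_admissible {F : Set (List A)} (hF : [] ∉ F) {x : ℝ≥0∞} {k : ℕ}
    (hkA : k ≤ Fintype.card A)
    (hbound : forbiddenWeight x F + 1 < x * (Fintype.card A - k + 1 : ℕ))
    (n : ℕ) : k ^ n ≤ ((wordsOfLength A n).filter (Admissible F)).card := by
  set P := fun u => Admissible F u ∧ potential x F u ≤ forbiddenWeight x F + 1
  have hnil : P [] := ⟨admissible_nil hF, (potential_nil_le x).trans le_self_add⟩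
  refine (pow_le_card_filter_wordsOfLength hnil
    (fun u hu => exists_extensions x hF hkA hbound hu.1 hu.2) n).trans (Finset.card_le_card ?_)
  exact Finset.monotone_filter_right _ fun _ _ hu => hu.1

end Potential

section Biextendable

variable {F : Set (List A)}

def IsBiextendable (F : Set (List A)) (t : ℕ) (u : List A) : Prop :=
  ∃ L R : List A, L.length = t ∧ R.length = t ∧ Admissible F (L ++ u ++ R)

lemma IsBiextendable.mono {t t' : ℕ} {u v : List A} (hv : IsBiextendable F t v)
    (huv : u <:+: v) (ht : t' ≤ t) : IsBiextendable F t' u := by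
  obtain ⟨L, R, hL, hR, hadm⟩ := hv
  obtain ⟨p, q, rfl⟩ := huv
  set X := L ++ p
  set Y := q ++ R
  set j := X.length - t'
  refine ⟨X.drop j, Y.take t', by simp [X, j]; omega, by simp [Y]; omega,
    hadm.of_infix ⟨X.take j, Y.drop t', ?_⟩⟩
  calc X.take j ++ (X.drop j ++ u ++ Y.take t') ++ Y.drop t'
      = (X.take j ++ X.drop j) ++ u ++ (Y.take t' ++ Y.drop t') := by simp only [List.append_assoc]
    _ = L ++ (p ++ u ++ q) ++ R := by simp only [List.take_append_drop, X, Y, List.append_assoc]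

variable [Fintype A]

variable (F) in
noncomputable def biextendableWords (m t : ℕ) : Finset (List A) :=
  (wordsOfLength A m).filter (IsBiextendable F t)

lemma antitone_biextendableWords (m : ℕ) : Antitone (biextendableWords F m) :=
  fun _ _ htt' => Finset.monotone_filter_right _ fun _ _ hu => hu.mono (List.infix_refl _) htt'

lemma card_admissible_le_mul_card_biextendableWords (m t : ℕ) :
    ((wordsOfLength A (t + m + t)).filter (Admissible F)).card ≤
      Fintype.card A ^ (2 * t) * (biextendableWords F m t).card := by
  have hsplit : ∀ u : List A, u.take t ++ (u.drop t).take m ++ u.drop (t + m) = u := by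
    intro u
    rw [← List.drop_drop, List.append_assoc, List.take_append_drop, List.take_append_drop]
  calc ((wordsOfLength A (t + m + t)).filter (Admissible F)).card
      ≤ (wordsOfLength A t ×ˢ biextendableWords F m t ×ˢ wordsOfLength A t).card := by
        refine Finset.card_le_card_of_injOn
          (fun u => (u.take t, (u.drop t).take m, u.drop (t + m))) ?_ ?_
        · intro u hu
          simp only [Finset.coe_filter, mem_wordsOfLength, Set.mem_ofPred_eq] at hu
          simp only [Finset.coe_product, Set.mem_prod, Finset.mem_coe, mem_wordsOfLength,
            biextendableWords, Finset.mem_filter, List.length_take, List.length_drop, hu.1]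
          refine ⟨by omega, ⟨by omega, u.take t, u.drop (t + m), ?_, ?_, ?_⟩, by omega⟩
          · simp [hu.1]
          · simp [hu.1]
          · rw [hsplit]; exact hu.2
        · intro u _ v _ huv
          simp only [Prod.mk.injEq] at huv
          rw [← hsplit u, ← hsplit v, huv.1, huv.2.1, huv.2.2]
    _ = Fintype.card A ^ (2 * t) * (biextendableWords F m t).card := by
        rw [Finset.card_product, Finset.card_product, card_wordsOfLength]
        ring

lemma card_biextendableWords_add_le (m₁ m₂ t : ℕ) :
    (biextendableWords F (m₁ + m₂) t).card ≤
      (biextendableWords F m₁ t).card * (biextendableWords F m₂ t).card := by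
  rw [← Finset.card_product]
  refine Finset.card_le_card_of_injOn (fun u => (u.take m₁, u.drop m₁)) ?_ ?_
  · intro u hu
    simp only [biextendableWords, Finset.coe_filter, mem_wordsOfLength, Set.mem_ofPred_eq] at hu
    simp only [Finset.coe_product, Set.mem_prod, Finset.mem_coe, biextendableWords,
      Finset.mem_filter, mem_wordsOfLength, List.length_take, List.length_drop, hu.1]
    exact ⟨⟨by omega, hu.2.mono (List.take_prefix _ _).isInfix le_rfl⟩,
      ⟨by omega, hu.2.mono (List.drop_suffix _ _).isInfix le_rfl⟩⟩
  · intro u _ v _ huv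
    simp only [Prod.mk.injEq] at huv
    rw [← List.take_append_drop m₁ u, ← List.take_append_drop m₁ v, huv.1, huv.2]

lemma card_biextendableWords_mul_le (m t R : ℕ) :
    (biextendableWords F (m * R) t).card ≤ (biextendableWords F m t).card ^ R := by
  induction R with
  | zero =>
    calc (biextendableWords F 0 t).card ≤ (wordsOfLength A 0).card :=
          Finset.card_le_card (Finset.filter_subset _ _)
      _ = 1 := by simp [card_wordsOfLength]
  | succ R ih =>
    calc (biextendableWords F (m * R + m) t).card
        ≤ (biextendableWords F (m * R) t).card * (biextendableWords F m t).card :=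
          card_biextendableWords_add_le _ _ t
      _ ≤ (biextendableWords F m t).card ^ R * (biextendableWords F m t).card := by gcongr

end Biextendable

lemma le_of_forall_pow_le_mul_pow {a b C : ℕ} (h : ∀ R, a ^ R ≤ C * b ^ R) : a ≤ b := by
  refine le_of_not_gt fun hba => ?_
  rcases Nat.eq_zero_or_pos b with rfl | hb
  · simpa [hba.ne'] using h 1
  · have hr : (1 : ℝ) < a / b := (one_lt_div (by positivity)).mpr (by exact_mod_cast hba)
    obtain ⟨R, hR⟩ := pow_unbounded_of_one_lt (C : ℝ) hr
    rw [div_pow, lt_div_iff₀ (by positivity)] at hR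
    exact hR.not_ge (by exact_mod_cast h R)

lemma exists_forall_subset_of_antitone {α : Type*} {f : ℕ → Finset α} (hf : Antitone f) :
    ∃ T, ∀ t, f T ⊆ f t := by
  refine ⟨Function.argmin (fun t => (f t).card), fun t => ?_⟩
  rcases le_total t (Function.argmin fun t => (f t).card) with ht | ht
  · exact hf ht
  · exact (Finset.eq_of_subset_of_card_le (hf ht) (Function.argmin_le (fun t => (f t).card) t)).ge

lemma exists_ge_forall_eq_of_mapClusterPt {ι : Type*} [TopologicalSpace A] [DiscreteTopology A]
    {z : ℕ → ι → A} {y : ι → A} (hy : MapClusterPt y atTop z) (s : Finset ι) (N : ℕ) :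
    ∃ t ≥ N, ∀ i ∈ s, z t i = y i := by
  have hnhds : ∀ᶠ y' in nhds y, ∀ i ∈ s, y' i = y i :=
    (Filter.eventually_all_finset s).mpr fun i _ =>
      (continuous_apply i).continuousAt.eventually_mem ((isOpen_discrete {y i}).mem_nhds rfl)
  exact Filter.frequently_atTop.mp (mapClusterPt_iff_frequently.mp hy _ hnhds) N

def placeWord (d : A) (W : List A) (t : ℕ) : ℤ → A := fun i => (W[(i + t).toNat]?).getD d

lemma placeWord_apply {d : A} {W : List A} {t i : ℕ} (hi : i < W.length) :
    placeWord d W t ((i : ℤ) - t) = W[i] := by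
  simp [placeWord, hi]

lemma exists_mem_XAF_occursIn [Finite A] [Nonempty A] {F : Set (List A)} {u : List A}
    (hu : ∀ t, IsBiextendable F t u) : ∃ y ∈ XAF F, OccursIn u y := by
  choose L R hL hR hadm using hu
  obtain ⟨d⟩ : Nonempty A := inferInstance
  let : TopologicalSpace A := ⊥
  have : DiscreteTopology A := ⟨rfl⟩
  obtain ⟨y, hy⟩ :=
    exists_clusterPt_of_compactSpace (map (fun t => placeWord d (L t ++ u ++ R t) t) atTop)
  refine ⟨y, fun w hw ⟨n, hn⟩ => ?_, 0, fun i => ?_⟩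
  · obtain ⟨t, ht, hzy⟩ := exists_ge_forall_eq_of_mapClusterPt hy
      (Finset.Ico n (n + w.length)) (n.natAbs + w.length)
    refine hadm t w hw (List.infix_iff_getElem?.mpr
      ⟨(n + t).toNat, by simp [hL, hR]; omega, fun i hi => ?_⟩)
    have hidx : i + (n + t).toNat < (L t ++ u ++ R t).length := by simp [hL, hR]; omega
    have hi' : placeWord d (L t ++ u ++ R t) t (n + i) = y (n + i) := hzy (n + i) (by simp; omega)
    rw [hn ⟨i, hi⟩, show n + i = ((i + (n + t).toNat : ℕ) : ℤ) - t by omega,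
      placeWord_apply hidx] at hi'
    rw [List.getElem?_eq_getElem hidx, hi']
    rfl
  · obtain ⟨t, -, hzy⟩ := exists_ge_forall_eq_of_mapClusterPt hy (Finset.Ico 0 u.length) 0
    have hi' : placeWord d (L t ++ u ++ R t) t (0 + i) = y (0 + i) := hzy _ (by simp)
    rw [← hi', show (0 : ℤ) + i = ((t + i : ℕ) : ℤ) - t by omega,
      placeWord_apply (by simp [hL]; omega)]
    simp [hL]

section Language

variable [Fintype A] {F : Set (List A)} {k : ℕ}

lemma pow_le_card_biextendableWords (hk : 0 < k)
    (hadm : ∀ n, k ^ n ≤ ((wordsOfLength A n).filter (Admissible F)).card) (m t : ℕ) :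
    k ^ m ≤ (biextendableWords F m t).card := by
  refine le_of_forall_pow_le_mul_pow (C := Fintype.card A ^ (2 * t)) fun R => ?_
  calc (k ^ m) ^ R = k ^ (m * R) := (pow_mul k m R).symm
    _ ≤ k ^ (t + m * R + t) := Nat.pow_le_pow_right hk (by omega)
    _ ≤ Fintype.card A ^ (2 * t) * (biextendableWords F (m * R) t).card :=
        (hadm _).trans (card_admissible_le_mul_card_biextendableWords _ _)
    _ ≤ _ := Nat.mul_le_mul_left _ (card_biextendableWords_mul_le m t R)

lemma pow_le_ncard_lang [Nonempty A] (hk : 0 < k)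
    (hadm : ∀ n, k ^ n ≤ ((wordsOfLength A n).filter (Admissible F)).card) (m : ℕ) :
    k ^ m ≤ (lang (XAF F) m).ncard := by
  obtain ⟨T, hT⟩ := exists_forall_subset_of_antitone (antitone_biextendableWords (F := F) m)
  have hsub : (biextendableWords F m T : Set (List A)) ⊆ lang (XAF F) m := by
    intro u hu
    obtain ⟨y, hy, hocc⟩ :=
      exists_mem_XAF_occursIn fun t => (Finset.mem_filter.mp (hT t hu)).2
    exact ⟨mem_wordsOfLength.mp (Finset.mem_filter.mp hu).1, y, hy, hocc⟩
  calc k ^ m ≤ (biextendableWords F m T).card := pow_le_card_biextendableWords hk hadm m T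
    _ = (biextendableWords F m T : Set (List A)).ncard := (Set.ncard_coe_finset _).symm
    _ ≤ (lang (XAF F) m).ncard :=
        Set.ncard_le_ncard hsub ((List.finite_length_eq A m).subset fun _ hu => hu.1)

end Language

lemma log_le_of_pow_le_of_tendsto {k : ℕ} (hk : 0 < k) {a : ℕ → ℕ}
    (ha : ∀ n, k ^ n ≤ a n) {h : ℝ}
    (hlim : Tendsto (fun n : ℕ => Real.log (a n) / n) atTop (nhds h)) :
    Real.log k ≤ h := by
  refine ge_of_tendsto hlim ((eventually_gt_atTop 0).mono fun n hn => ?_)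
  rw [le_div_iff₀ (by exact_mod_cast hn), mul_comm, ← Real.log_pow]
  exact Real.log_le_log (by positivity) (by exact_mod_cast ha n)

lemma forbiddenWeight_add_one_lt [Fintype A] {F : Set (List A)} {c : ℝ} {k : ℕ}
    (hkA : k ≤ Fintype.card A)
    (hsum : forbiddenWeight (ENNReal.ofReal c) F <
      ENNReal.ofReal (c * ((Fintype.card A : ℝ) - k + 1) - 1)) :
    forbiddenWeight (ENNReal.ofReal c) F + 1 <
      ENNReal.ofReal c * (Fintype.card A - k + 1 : ℕ) := by
  have hN :
      ((Fintype.card A - k + 1 : ℕ) : ℝ≥0∞) = ENNReal.ofReal (Fintype.card A - k + 1) := by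
    rw [← ENNReal.ofReal_natCast]
    push_cast [Nat.cast_sub hkA]
    rfl
  have hN_nonneg : (0 : ℝ) ≤ Fintype.card A - k + 1 := by
    have : (k : ℝ) ≤ Fintype.card A := by exact_mod_cast hkA
    linarith
  have hpos : 0 < c * (Fintype.card A - k + 1) - 1 :=
    ENNReal.ofReal_pos.mp (zero_le.trans_lt hsum)
  calc _ < ENNReal.ofReal (c * (Fintype.card A - k + 1) - 1) + 1 :=
        ENNReal.add_lt_add_right ENNReal.one_ne_top hsum
    _ = ENNReal.ofReal c * (Fintype.card A - k + 1 : ℕ) := by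
        rw [← ENNReal.ofReal_one, ← ENNReal.ofReal_add hpos.le zero_le_one, sub_add_cancel, hN,
          ← ENNReal.ofReal_mul' hN_nonneg]

theorem entropy_lower_bound_of_small_forbidden_list_general
    {A : Type} [Fintype A] [Nonempty A]
    (F : Set (List A)) (hFne : [] ∉ F)
    (c : ℝ)
    (k : ℕ) (hk : 0 < k) (hkA : k < Fintype.card A)
    (hsum : ∑' v : F, ENNReal.ofReal c ^ (v : List A).length <
      ENNReal.ofReal (c * ((Fintype.card A : ℝ) - k + 1) - 1)) :
    ∀ hX : ℝ, entropyIs (XAF F) hX → Real.log k ≤ hX := by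
  intro hX hent
  have hadm := pow_le_card_admissible hFne hkA.le (forbiddenWeight_add_one_lt hkA.le hsum)
  exact log_le_of_pow_le_of_tendsto hk (pow_le_ncard_lang hk hadm) hent

/-- a lower bound on the entropy of `X(A, F)` from Miller's criterion. -/
theorem entropy_lower_bound_of_small_forbidden_list
    {A : Type} [Fintype A] [Nonempty A]
    (F : Set (List A)) (hFne : [] ∉ F)
    (c : ℝ) (hc : 1 / (Fintype.card A : ℝ) < c)
    (k : ℕ) (hk : 0 < k) (hkA : k < Fintype.card A)
    (hsum : ∑' v : F, ENNReal.ofReal c ^ (v : List A).length <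
      ENNReal.ofReal (c * ((Fintype.card A : ℝ) - k + 1) - 1)) :
    ∀ hX : ℝ, entropyIs (XAF F) hX → Real.log k ≤ hX :=
  entropy_lower_bound_of_small_forbidden_list_general F hFne c k hk hkA hsum

end SlowForbidden
end

section
/- Let A be a finite alphabet, X ⊆ A^ℤ a nonempty subshift, and β a real number with β < 2·h(X) − log|A|. Then the set S := {n ∈ ℕ : for all 1 ≤ k < n, |L_n(X)|/|L_{n−k}(X)| ≥ e^{kβ}} has lower density strictly greater than 1/2. -/
open MeasureTheory Filter Set
open scoped ENNReal

namespace SlowForbidden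

/-!
Write `a n = log |L_n(X)|`. Cutting words into a prefix and a suffix shows that `a` is
subadditive, so by Fekete's lemma `n h(X) ≤ a n`, and with `a 1 ≤ log |A|` also
`a (n + 1) ≤ a n + log |A|`. Taking logarithms, the set in the theorem is the set of weak record
times of `c n = a n - n β`, whose increments are at most `Δ = log |A| - β`. The running maximum of
`c` can only grow at record times, and then by at most `Δ`; since `c n ≥ n (h(X) - β)`, there are
at least `n (h(X) - β) / Δ` record times in `[1, n]`, and `(h(X) - β) / Δ > 1 / 2` is exactly the
hypothesis on `β`.
-/

lemma Subadditive.mul_le_of_tendsto {u : ℕ → ℝ} (hu : Subadditive u) {h : ℝ}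
    (hlim : Tendsto (fun n => u n / n) atTop (nhds h)) {n : ℕ} (hn : n ≠ 0) : n * h ≤ u n := by
  have hbdd := hlim.bddBelow_range
  rw [tendsto_nhds_unique hlim (hu.tendsto_lim hbdd)]
  exact (le_div_iff₀' (by positivity)).1 (hu.lim_le_div hbdd hn)

section Language

variable {A : Type*} {X : Set (ℤ → A)}

lemma lang_finite [Finite A] (n : ℕ) : (lang X n).Finite :=
  (List.finite_length_eq A n).subset fun _ hw => hw.1

lemma lang_zero (hX : X.Nonempty) : lang X 0 = {[]} := by
  obtain ⟨x, hx⟩ := hX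
  ext w
  exact ⟨fun hw => List.length_eq_zero_iff.1 hw.1, by rintro rfl; exact ⟨rfl, x, hx, 0, (·.elim0)⟩⟩

lemma lang_nonempty (hX : X.Nonempty) (n : ℕ) : (lang X n).Nonempty := by
  obtain ⟨x, hx⟩ := hX
  exact ⟨List.ofFn fun i : Fin n => x i, List.length_ofFn, x, hx, 0, fun i => by simp⟩

lemma ncard_lang_pos [Finite A] (hX : X.Nonempty) (n : ℕ) : 0 < (lang X n).ncard :=
  (ncard_pos (lang_finite n)).2 (lang_nonempty hX n)

lemma OccursIn.take {w : List A} {x : ℤ → A} (h : OccursIn w x) (m : ℕ) :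
    OccursIn (w.take m) x := by
  obtain ⟨p, hp⟩ := h
  refine ⟨p, fun i => ?_⟩
  have hi : (i : ℕ) < w.length := by have := i.2; simp at this; omega
  simpa using hp ⟨i, hi⟩

lemma OccursIn.drop {w : List A} {x : ℤ → A} (h : OccursIn w x) (m : ℕ) :
    OccursIn (w.drop m) x := by
  obtain ⟨p, hp⟩ := h
  refine ⟨p + m, fun i => ?_⟩
  have hi : m + (i : ℕ) < w.length := by have := i.2; simp at this; omega
  simpa [add_assoc] using hp ⟨m + i, hi⟩

lemma ncard_lang_add_le [Finite A] (m n : ℕ) :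
    (lang X (m + n)).ncard ≤ (lang X m).ncard * (lang X n).ncard := by
  rw [← ncard_prod]
  refine ncard_le_ncard_of_injOn (fun w => (w.take m, w.drop m)) ?_ ?_
    ((lang_finite m).prod (lang_finite n))
  · rintro w ⟨hl, x, hx, hw⟩
    exact ⟨⟨by simp [hl], x, hx, hw.take m⟩, ⟨by simp [hl], x, hx, hw.drop m⟩⟩
  · intro w _ v _ he
    simpa using congrArg (fun p : List A × List A => p.1 ++ p.2) he

lemma ncard_lang_one_le [Fintype A] : (lang X 1).ncard ≤ Fintype.card A := by
  have hsub : lang X 1 ⊆ range fun a : A => [a] := fun w hw => by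
    obtain ⟨a, rfl⟩ := List.length_eq_one_iff.1 hw.1
    exact ⟨a, rfl⟩
  calc (lang X 1).ncard ≤ (range fun a : A => [a]).ncard := ncard_le_ncard hsub (finite_range _)
    _ = Fintype.card A := by
      rw [ncard_range_of_injective List.singleton_injective, Nat.card_eq_fintype_card]

lemma subadditive_log_ncard_lang [Finite A] (hX : X.Nonempty) :
    Subadditive fun n => Real.log (lang X n).ncard := fun m n => by
  have hpos (n : ℕ) : (0 : ℝ) < (lang X n).ncard := mod_cast ncard_lang_pos hX n
  rw [← Real.log_mul (hpos m).ne' (hpos n).ne']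
  exact Real.log_le_log (hpos _) (mod_cast ncard_lang_add_le m n)

end Language

def recordTimes (c : ℕ → ℝ) : Set ℕ :=
  {m | ∀ j ∈ Ico 1 m, c j ≤ c m}

lemma monotone_ncard_inter_Icc (S : Set ℕ) : Monotone fun n => (S ∩ Icc 1 n).ncard :=
  fun _ n hmn => ncard_le_ncard (inter_subset_inter_right _ (Icc_subset_Icc_right hmn))
    ((finite_Icc 1 n).inter_of_right S)

lemma ncard_inter_Icc_add_one_of_mem {S : Set ℕ} {n : ℕ} (h : n + 1 ∈ S) :
    (S ∩ Icc 1 (n + 1)).ncard = (S ∩ Icc 1 n).ncard + 1 := by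
  rw [← insert_Icc_right_eq_Icc_add_one (by omega), inter_insert_of_mem h,
    ncard_insert_of_notMem (by simp) ((finite_Icc 1 n).inter_of_right S)]

lemma sub_le_mul_ncard_recordTimes {c : ℕ → ℝ} {Δ : ℝ} (hΔ : 0 ≤ Δ)
    (hstep : ∀ n, c (n + 1) ≤ c n + Δ) (n : ℕ) :
    ∀ j ≤ n, c j - c 0 ≤ Δ * (recordTimes c ∩ Icc 1 n).ncard := by
  induction n with
  | zero =>
    intro j hj
    obtain rfl := Nat.le_zero.1 hj
    simp
  | succ n ih =>
    have hmono : Δ * (recordTimes c ∩ Icc 1 n).ncard ≤ Δ * (recordTimes c ∩ Icc 1 (n + 1)).ncard :=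
      mul_le_mul_of_nonneg_left (mod_cast monotone_ncard_inter_Icc _ n.le_succ) hΔ
    intro j hj
    rcases hj.lt_or_eq with hj | rfl
    · exact (ih j (by omega)).trans hmono
    by_cases hrec : n + 1 ∈ recordTimes c
    · rw [ncard_inter_Icc_add_one_of_mem hrec]
      push_cast
      linarith [ih n le_rfl, hstep n]
    · simp only [recordTimes, mem_Ico, mem_ofPred_eq, not_forall, not_le] at hrec
      obtain ⟨i, ⟨_, hi⟩, hlt⟩ := hrec
      linarith [ih i (by omega)]

lemma div_le_liminf_ncard_recordTimes {c : ℕ → ℝ} {γ Δ : ℝ} (hΔ : 0 < Δ)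
    (hstep : ∀ n, c (n + 1) ≤ c n + Δ) (hgrowth : ∀ n, c 0 + n * γ ≤ c n) :
    γ / Δ ≤ liminf (fun n : ℕ => ((recordTimes c ∩ Icc 1 n).ncard : ℝ) / n) atTop := by
  have hle_one (n : ℕ) : ((recordTimes c ∩ Icc 1 n).ncard : ℝ) / n ≤ 1 := by
    refine div_le_one_of_le₀ ?_ n.cast_nonneg
    have := ncard_inter_le_ncard_right (recordTimes c) (Icc 1 n)
    rw [ncard_Icc_nat] at this
    exact_mod_cast this.trans (by omega)
  refine le_liminf_of_le (isCoboundedUnder_ge_of_le atTop hle_one) ?_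
  filter_upwards [eventually_gt_atTop 0] with n hn
  have hn : (0 : ℝ) < n := mod_cast hn
  rw [div_le_div_iff₀ hΔ hn]
  linarith [hgrowth n, sub_le_mul_ncard_recordTimes hΔ.le hstep n n le_rfl]

lemma exp_mul_le_div_iff {u : ℕ → ℝ} (hu : ∀ n, 0 < u n) (β : ℝ) {k m : ℕ} (hkm : k ≤ m) :
    Real.exp (k * β) ≤ u m / u (m - k) ↔
      Real.log (u (m - k)) - (m - k : ℕ) * β ≤ Real.log (u m) - m * β := by
  rw [← Real.le_log_iff_exp_le (div_pos (hu m) (hu (m - k))),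
    Real.log_div (hu m).ne' (hu (m - k)).ne', Nat.cast_sub hkm]
  constructor <;> intro h <;> linarith

lemma setOf_exp_mul_le_div_eq_recordTimes {u : ℕ → ℝ} (hu : ∀ n, 0 < u n) (β : ℝ) :
    {m : ℕ | ∀ k : ℕ, 1 ≤ k → k < m → Real.exp (k * β) ≤ u m / u (m - k)} =
      recordTimes fun n => Real.log (u n) - n * β := by
  ext m
  simp only [mem_ofPred_eq, recordTimes, mem_Ico]
  constructor
  · intro h j ⟨hj1, hjm⟩
    have := (exp_mul_le_div_iff hu β (Nat.sub_le m j)).1 (h (m - j) (by omega) (by omega))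
    rwa [Nat.sub_sub_self hjm.le] at this
  · intro h k hk1 hkm
    exact (exp_mul_le_div_iff hu β hkm.le).2 (h (m - k) ⟨by omega, by omega⟩)

theorem pliss_set_lower_density_general
    {A : Type} [Fintype A]
    (X : Set (ℤ → A)) (hXne : X.Nonempty)
    (hX : ℝ) (hent : entropyIs X hX)
    (β : ℝ) (hβ : β < 2 * hX - Real.log (Fintype.card A)) :
    1 / 2 < Filter.liminf (fun n : ℕ =>
      (({m : ℕ | ∀ k : ℕ, 1 ≤ k → k < m →
          Real.exp (k * β) ≤ ((lang X m).ncard : ℝ) / ((lang X (m - k)).ncard : ℝ)}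
        ∩ Set.Icc 1 n).ncard : ℝ) / n) atTop := by
  set a : ℕ → ℝ := fun n => Real.log (lang X n).ncard
  have ha0 : a 0 = 0 := by simp [a, lang_zero hXne]
  have hstep (n : ℕ) : a (n + 1) ≤ a n + Real.log (Fintype.card A) := by
    have hone : a 1 ≤ Real.log (Fintype.card A) :=
      Real.log_le_log (mod_cast ncard_lang_pos hXne 1) (mod_cast ncard_lang_one_le)
    linarith [subadditive_log_ncard_lang hXne n 1]
  have hgrowth (n : ℕ) : n * hX ≤ a n := by
    rcases eq_or_ne n 0 with rfl | hn
    · simp [ha0]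
    · exact Subadditive.mul_le_of_tendsto (subadditive_log_ncard_lang hXne) hent hn
  have hS := setOf_exp_mul_le_div_eq_recordTimes (u := fun n => ((lang X n).ncard : ℝ))
    (fun n => mod_cast ncard_lang_pos hXne n) β
  rw [hS]
  have hlogA : hX ≤ Real.log (Fintype.card A) := by simpa [ha0] using (hgrowth 1).trans (hstep 0)
  refine lt_of_lt_of_le ?_ (div_le_liminf_ncard_recordTimes (γ := hX - β)
    (Δ := Real.log (Fintype.card A) - β) (by linarith) (fun n => ?_) (fun n => ?_))
  · rw [lt_div_iff₀ (by linarith)]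
    linarith
  · push_cast
    linarith [hstep n]
  · simp only [CharP.cast_eq_zero, zero_mul, sub_zero]
    linarith [hgrowth n, ha0]

/-- Pliss-type lemma: the set of `n` for which all ratios
`|L_n(X)|/|L_{n-k}(X)|` are at least `e^{kβ}` has lower density greater than `1/2`. -/
theorem pliss_set_lower_density
    {A : Type} [Fintype A] [Nonempty A] [DecidableEq A]
    [TopologicalSpace A] [DiscreteTopology A]
    (X : Set (ℤ → A)) (hXne : X.Nonempty) (hXcl : IsClosed X)
    (hXinv : shiftMap A '' X = X)
    (hX : ℝ) (hent : entropyIs X hX)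
    (β : ℝ) (hβ : β < 2 * hX - Real.log (Fintype.card A)) :
    1 / 2 < Filter.liminf (fun n : ℕ =>
      (({m : ℕ | ∀ k : ℕ, 1 ≤ k → k < m →
          Real.exp (k * β) ≤ ((lang X m).ncard : ℝ) / ((lang X (m - k)).ncard : ℝ)}
        ∩ Set.Icc 1 n).ncard : ℝ) / n) atTop :=
  pliss_set_lower_density_general X hXne hX hent β hβ

end SlowForbidden
end

section
/- Let A be a finite alphabet, F a set of finite words over A with F_n := F ∩ A^n, and X = X(A, F) the induced subshift. If ∑_{n=1}^{∞} |F_n|·(3/|A|)^n < 1/5, then h(X) > log(3|A|/5). -/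
open MeasureTheory Filter Set
open scoped ENNReal

namespace SlowForbidden

/-!
Give each occurrence of a forbidden word `w` in a finite window the weight `x_w = (2/|A|)^|w|`.
Since `x_w = (2/3)^|w| (3/|A|)^|w|`, the hypothesis bounds the total weight of the occurrences
meeting an interval of length `k` by `2k/15 + 3/25`; together with `1 - x ≥ exp(-2x)` and
`2^m exp(-(4m/15 + 6/25)) ≥ 1` this is the condition of the asymmetric Lovász local lemma for a
uniformly random configuration. In counting form the lemma shows that the configurations of
`[-M, M)` avoiding `F` show at least `|A|^n exp(-(4n/15 + 6/25))` distinct words on `[0, n)`.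
By compactness these central words lie in `L_n(X)` once `M` is large, so
`h(X) ≥ log |A| - 4/15 > log |A| - log (5/3)`.
-/

section LocalLemma

open Classical

variable {ι A κ β : Type*} [Fintype A]

/-- Gluing a point of `P.filter Q` with an arbitrary pattern on `s` is an injection into `P`. -/
lemma card_filter_mul_pow_le (s : Finset ι) {P : Finset (ι → A)} {Q : (ι → A) → Prop}
    [DecidablePred Q]
    (hP : ∀ c ∈ P, ∀ c', (∀ i ∉ s, c i = c' i) → c' ∈ P)
    (hQ : ∀ c c', Q c → Q c' → ∀ i ∈ s, c i = c' i) :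
    (P.filter Q).card * Fintype.card A ^ s.card ≤ P.card := by
  let glue : (ι → A) × (s → A) → ι → A := fun ca i => if h : i ∈ s then ca.2 ⟨i, h⟩ else ca.1 i
  have hcard : (P.filter Q ×ˢ (Finset.univ : Finset (s → A))).card =
      (P.filter Q).card * Fintype.card A ^ s.card := by
    simp [Finset.card_product]
  rw [← hcard]
  refine Finset.card_le_card_of_injOn glue (fun ca hca => ?_) (fun ca hca ca' hca' heq => ?_)
  · simp only [Finset.coe_product, Set.mem_prod, Finset.coe_filter, Set.mem_ofPred_eq] at hca
    exact hP ca.1 hca.1.1 _ fun i hi => by simp [glue, hi]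
  · simp only [Finset.coe_product, Set.mem_prod, Finset.coe_filter, Set.mem_ofPred_eq] at hca hca'
    have hglue := congrFun heq
    refine Prod.ext (funext fun i => ?_) (funext fun i => ?_)
    · by_cases hi : i ∈ s
      · exact hQ _ _ hca.1.2 hca'.1.2 i hi
      · simpa [glue, hi] using hglue i
    · simpa [glue] using hglue i

variable [Fintype ι]

noncomputable def avoiders (B : κ → (ι → A) → Prop) (S : Finset κ) : Finset (ι → A) :=
  Finset.univ.filter fun c => ∀ e ∈ S, ¬ B e c

variable {B : κ → (ι → A) → Prop}

lemma mem_avoiders {S : Finset κ} {c : ι → A} : c ∈ avoiders B S ↔ ∀ e ∈ S, ¬ B e c := by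
  simp [avoiders]

lemma avoiders_empty : avoiders B ∅ = Finset.univ := by
  simp [avoiders]

lemma avoiders_insert (e : κ) (S : Finset κ) :
    avoiders B (insert e S) = (avoiders B S).filter (¬ B e ·) := by
  ext c
  simp only [avoiders, Finset.mem_filter, Finset.mem_univ, true_and, Finset.forall_mem_insert]
  tauto

lemma avoiders_anti {S T : Finset κ} (h : S ⊆ T) : avoiders B T ⊆ avoiders B S := by
  intro c
  simp only [avoiders, Finset.mem_filter, Finset.mem_univ, true_and]
  exact fun hc e he => hc e (h he)

/-- Hypotheses of the asymmetric Lovász local lemma for events `B e`, `e ∈ E`, of a uniformly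
random configuration `ι → A`. Each `B e` is a cylinder on `supp e` (it depends only on, and fixes,
the coordinates in `supp e`), so it has probability `|A| ^ (-#(supp e))`; this turns the usual
condition `P(B e) ≤ x e * ∏ f ∈ nbhd e, (1 - x f)` into `one_le`. -/
structure LocalLemmaHyp (B : κ → (ι → A) → Prop) (supp : κ → Finset ι) (nbhd : κ → Finset κ)
    (x : κ → ℝ) (E : Finset κ) : Prop where
  iff_of_eqOn : ∀ e ∈ E, ∀ c c', (∀ i ∈ supp e, c i = c' i) → (B e c ↔ B e c')
  eqOn_supp : ∀ e ∈ E, ∀ c c', B e c → B e c' → ∀ i ∈ supp e, c i = c' i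
  nbhd_subset : ∀ e ∈ E, nbhd e ⊆ E
  disjoint_of_notMem_nbhd : ∀ e ∈ E, ∀ f ∈ E, f ∉ nbhd e → Disjoint (supp f) (supp e)
  nonneg : ∀ e ∈ E, 0 ≤ x e
  lt_one : ∀ e ∈ E, x e < 1
  one_le : ∀ e ∈ E, 1 ≤ x e * Fintype.card A ^ (supp e).card * ∏ f ∈ nbhd e, (1 - x f)

lemma prod_mul_card_avoiders_sdiff_le {x : κ → ℝ} {S D : Finset κ} (hD : D ⊆ S)
    (hx : ∀ f ∈ D, x f ≤ 1)
    (hstep : ∀ T ⊂ S, ∀ f ∈ S, (1 - x f) * ((avoiders B T).card : ℝ) ≤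
      (avoiders B (insert f T)).card) :
    (∏ f ∈ D, (1 - x f)) * ((avoiders B (S \ D)).card : ℝ) ≤ (avoiders B S).card := by
  induction D using Finset.induction_on with
  | empty => simp
  | insert f D hfD ih =>
    have hfS : f ∈ S := hD (Finset.mem_insert_self f D)
    have hDS : D ⊆ S := (Finset.subset_insert f D).trans hD
    have hsub : S \ insert f D ⊂ S :=
      Finset.sdiff_ssubset hD (Finset.insert_nonempty f D)
    have hins : insert f (S \ insert f D) = S \ D :=
      Finset.sdiff_insert_insert_of_mem_of_notMem hfS hfD
    have hprod : 0 ≤ ∏ g ∈ D, (1 - x g) :=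
      Finset.prod_nonneg fun g hg => sub_nonneg.2 (hx g (Finset.mem_insert_of_mem hg))
    calc (∏ g ∈ insert f D, (1 - x g)) * ((avoiders B (S \ insert f D)).card : ℝ)
        = (∏ g ∈ D, (1 - x g)) * ((1 - x f) * (avoiders B (S \ insert f D)).card) := by
          rw [Finset.prod_insert hfD]; ring
      _ ≤ (∏ g ∈ D, (1 - x g)) * (avoiders B (S \ D)).card := by
          rw [← hins]; exact mul_le_mul_of_nonneg_left (hstep _ hsub f hfS) hprod
      _ ≤ (avoiders B S).card := ih hDS fun g hg => hx g (Finset.mem_insert_of_mem hg)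


namespace LocalLemmaHyp

variable {supp : κ → Finset ι} {nbhd : κ → Finset κ} {x : κ → ℝ} {E : Finset κ}

lemma mem_avoiders_of_eqOn_compl (h : LocalLemmaHyp B supp nbhd x E) {S : Finset κ}
    (hS : S ⊆ E) {s : Finset ι} (hdisj : ∀ f ∈ S, Disjoint (supp f) s) {c c' : ι → A}
    (hc : c ∈ avoiders B S) (hcc' : ∀ i ∉ s, c i = c' i) : c' ∈ avoiders B S := by
  rw [mem_avoiders] at hc ⊢
  refine fun f hf hf' => hc f hf ((h.iff_of_eqOn f (hS hf) c c' fun i hi => ?_).2 hf')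
  exact hcc' i (Finset.disjoint_left.1 (hdisj f hf) hi)

/-- Conditioned on avoiding `S`, the event `B e` has probability at most `x e`: `B e` is independent
of the events of `S` outside `nbhd e`, and `hstep` bounds the cost of forgetting the others. -/
lemma card_filter_avoiders_le (h : LocalLemmaHyp B supp nbhd x E) {S : Finset κ} (hS : S ⊆ E)
    {e : κ} (he : e ∈ E)
    (hstep : ∀ T ⊂ S, ∀ f ∈ S, (1 - x f) * ((avoiders B T).card : ℝ) ≤
      (avoiders B (insert f T)).card) :
    (((avoiders B S).filter (B e)).card : ℝ) ≤ x e * (avoiders B S).card := by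
  set far := S \ nbhd e
  have hfar : far ⊆ E := Finset.sdiff_subset.trans hS
  have hindep : (((avoiders B far).filter (B e)).card : ℝ) * Fintype.card A ^ (supp e).card ≤
      (avoiders B far).card := by
    exact_mod_cast card_filter_mul_pow_le (supp e)
      (fun c hc c' => h.mem_avoiders_of_eqOn_compl hfar
        (fun f hf => h.disjoint_of_notMem_nbhd e he f (hfar hf) (Finset.mem_sdiff.1 hf).2) hc)
      (h.eqOn_supp e he)
  have hfar_le : (∏ f ∈ nbhd e, (1 - x f)) * ((avoiders B far).card : ℝ) ≤
      (avoiders B S).card := by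
    have hchain := prod_mul_card_avoiders_sdiff_le (Finset.inter_subset_left (s₂ := nbhd e))
      (fun f hf => (h.lt_one f (hS (Finset.mem_inter.1 hf).1)).le) hstep
    rw [Finset.sdiff_inter_self_left] at hchain
    refine le_trans (mul_le_mul_of_nonneg_right ?_ (Nat.cast_nonneg _)) hchain
    exact Finset.prod_le_prod_of_subset_of_le_one Finset.inter_subset_right
      (fun f hf => sub_nonneg.2 (h.lt_one f (h.nbhd_subset e he hf)).le)
      (fun f hf _ => sub_le_self 1 (h.nonneg f (h.nbhd_subset e he hf)))
  have hfilter : (avoiders B S).filter (B e) ⊆ (avoiders B far).filter (B e) :=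
    Finset.filter_subset_filter _ (avoiders_anti Finset.sdiff_subset)
  calc (((avoiders B S).filter (B e)).card : ℝ)
      ≤ ((avoiders B far).filter (B e)).card := by exact_mod_cast Finset.card_le_card hfilter
    _ ≤ ((avoiders B far).filter (B e)).card *
        (x e * Fintype.card A ^ (supp e).card * ∏ f ∈ nbhd e, (1 - x f)) :=
        le_mul_of_one_le_right (Nat.cast_nonneg _) (h.one_le e he)
    _ = x e * ((∏ f ∈ nbhd e, (1 - x f)) *
        (((avoiders B far).filter (B e)).card * Fintype.card A ^ (supp e).card)) := by ring
    _ ≤ x e * (avoiders B S).card := by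
        have := h.nonneg e he
        have : 0 ≤ ∏ f ∈ nbhd e, (1 - x f) := Finset.prod_nonneg fun f hf =>
          sub_nonneg.2 (h.lt_one f (h.nbhd_subset e he hf)).le
        grw [hindep, hfar_le]

/-- The asymmetric Lovász local lemma, in counting form. -/
theorem one_sub_mul_card_avoiders_le (h : LocalLemmaHyp B supp nbhd x E) {S : Finset κ}
    (hS : S ⊆ E) {e : κ} (he : e ∈ E) :
    (1 - x e) * ((avoiders B S).card : ℝ) ≤ (avoiders B (insert e S)).card := by
  induction S using Finset.strongInduction generalizing e with
  | H S ih =>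
  have hsplit : ((avoiders B S).card : ℝ) =
      (avoiders B (insert e S)).card + ((avoiders B S).filter (B e)).card := by
    rw [avoiders_insert, add_comm]
    exact_mod_cast (Finset.card_filter_add_card_filter_not _).symm
  have hkey := h.card_filter_avoiders_le hS he fun T hT f hf =>
    ih T hT (hT.subset.trans hS) (hS hf)
  rw [hsplit] at hkey ⊢
  nlinarith [h.nonneg e he]

lemma card_avoiders_pos [Nonempty A] (h : LocalLemmaHyp B supp nbhd x E) :
    0 < ((avoiders B E).card : ℝ) := by
  have hchain := prod_mul_card_avoiders_sdiff_le (Finset.Subset.refl E)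
    (fun f hf => (h.lt_one f hf).le) fun T hT f hf => h.one_sub_mul_card_avoiders_le hT.subset hf
  rw [Finset.sdiff_self, avoiders_empty, Finset.card_univ, Fintype.card_fun] at hchain
  refine lt_of_lt_of_le ?_ hchain
  have := Fintype.card_pos (α := A)
  exact mul_pos (Finset.prod_pos fun f hf => sub_pos.2 (h.lt_one f hf)) (by positivity)

/-- Each fibre of `g` fixes the coordinates in `W`, so it holds at most a `|A| ^ (-#W)` fraction of
the configurations avoiding the events far from `W`. -/
theorem pow_mul_prod_le_card_image [Nonempty A] [DecidableEq β] (h : LocalLemmaHyp B supp nbhd x E)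
    {W : Finset ι} {nbhdW : Finset κ} (hsub : nbhdW ⊆ E)
    (hdisj : ∀ f ∈ E, f ∉ nbhdW → Disjoint (supp f) W) {g : (ι → A) → β}
    (hg : ∀ c c', g c = g c' → ∀ i ∈ W, c i = c' i) :
    (Fintype.card A : ℝ) ^ W.card * ∏ f ∈ nbhdW, (1 - x f) ≤ ((avoiders B E).image g).card := by
  set far := E \ nbhdW
  have hfar : far ⊆ E := Finset.sdiff_subset
  have hchain := prod_mul_card_avoiders_sdiff_le hsub (fun f hf => (h.lt_one f (hsub hf)).le)
    fun T hT f hf => h.one_sub_mul_card_avoiders_le hT.subset hf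
  have hfiber : ∀ u, (((avoiders B E).filter (g · = u)).card : ℝ) * Fintype.card A ^ W.card ≤
      (avoiders B far).card := by
    intro u
    have hle := card_filter_mul_pow_le W (P := avoiders B far) (Q := (g · = u))
      (fun c hc c' => h.mem_avoiders_of_eqOn_compl hfar
        (fun f hf => hdisj f (hfar hf) (Finset.mem_sdiff.1 hf).2) hc)
      (fun c c' hc hc' => hg c c' (hc.trans hc'.symm))
    have hsub := Finset.filter_subset_filter (g · = u) (avoiders_anti (B := B) hfar)
    exact_mod_cast (Nat.mul_le_mul_right _ (Finset.card_le_card hsub)).trans hle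
  have hsum : ((avoiders B E).card : ℝ) * Fintype.card A ^ W.card ≤
      ((avoiders B E).image g).card * (avoiders B far).card := by
    rw [Finset.card_eq_sum_card_image g (avoiders B E), Nat.cast_sum, Finset.sum_mul]
    simpa using Finset.sum_le_sum fun u (_ : u ∈ (avoiders B E).image g) => hfiber u
  have hpos : 0 < ((avoiders B far).card : ℝ) := h.card_avoiders_pos.trans_le
    (by exact_mod_cast Finset.card_le_card (avoiders_anti hfar))
  refine le_of_mul_le_mul_right ?_ hpos
  calc (Fintype.card A : ℝ) ^ W.card * (∏ f ∈ nbhdW, (1 - x f)) * (avoiders B far).card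
      = ((∏ f ∈ nbhdW, (1 - x f)) * (avoiders B far).card) * Fintype.card A ^ W.card := by ring
    _ ≤ (avoiders B E).card * Fintype.card A ^ W.card := by gcongr
    _ ≤ _ := hsum

end LocalLemmaHyp

end LocalLemma

section Words

variable {A : Type*}

def readWord (x : ℤ → A) (p : ℤ) (n : ℕ) : List A := List.ofFn fun i : Fin n => x (p + i)

@[simp] lemma length_readWord (x : ℤ → A) (p : ℤ) (n : ℕ) : (readWord x p n).length = n :=
  List.length_ofFn

lemma readWord_eq_readWord_iff {x y : ℤ → A} {p : ℤ} {n : ℕ} :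
    readWord x p n = readWord y p n ↔ ∀ i, p ≤ i → i < p + n → x i = y i := by
  rw [readWord, readWord, List.ofFn_inj, funext_iff]
  refine ⟨fun h i hpi hin => ?_, fun h _ => h _ (by omega) (by omega)⟩
  have := h ⟨(i - p).toNat, by omega⟩
  rwa [Fin.val_mk, show p + ((i - p).toNat : ℤ) = i by omega] at this

lemma occursIn_iff_exists_readWord {w : List A} {x : ℤ → A} :
    OccursIn w x ↔ ∃ p, readWord x p w.length = w := by
  simp [OccursIn, readWord, List.ext_get_iff, Fin.forall_iff]

lemma isClopen_setOf_readWord_eq [TopologicalSpace A] [DiscreteTopology A] (p : ℤ) (n : ℕ)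
    (w : List A) : IsClopen {x : ℤ → A | readWord x p n = w} :=
  (isClopen_discrete {v : Fin n → A | List.ofFn v = w}).preimage
    (continuous_pi fun _ => continuous_apply _)

def AvoidsOn (F : Set (List A)) (a b : ℤ) (x : ℤ → A) : Prop :=
  ∀ w ∈ F, ∀ p, a ≤ p → p + w.length ≤ b → readWord x p w.length ≠ w

lemma AvoidsOn.mono {F : Set (List A)} {a b a' b' : ℤ} {x : ℤ → A} (h : AvoidsOn F a b x)
    (ha : a ≤ a') (hb : b' ≤ b) : AvoidsOn F a' b' x :=
  fun w hw p hp hpb => h w hw p (ha.trans hp) (hpb.trans hb)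

lemma mem_XAF_of_forall_avoidsOn {F : Set (List A)} {x : ℤ → A}
    (h : ∀ M : ℕ, AvoidsOn F (-M) M x) : x ∈ XAF F := by
  intro w hw hocc
  obtain ⟨p, hp⟩ := occursIn_iff_exists_readWord.1 hocc
  exact h (p.natAbs + w.length) w hw p (by omega) (by omega) hp

lemma isClosed_setOf_avoidsOn [TopologicalSpace A] [DiscreteTopology A] (F : Set (List A))
    (a b : ℤ) : IsClosed {x : ℤ → A | AvoidsOn F a b x} := by
  simp only [AvoidsOn, Set.ofPred_forall]
  exact isClosed_iInter fun w => isClosed_iInter fun _ => isClosed_iInter fun p =>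
    isClosed_iInter fun _ => isClosed_iInter fun _ =>
      (isClopen_setOf_readWord_eq p _ w).isOpen.isClosed_compl

def centralWords (F : Set (List A)) (n M : ℕ) : Set (List A) :=
  {u | ∃ x, AvoidsOn F (-M) M x ∧ readWord x 0 n = u}

lemma centralWords_anti (F : Set (List A)) (n : ℕ) : Antitone (centralWords F n) :=
  fun _ _ hMM' _ ⟨x, hx, hxu⟩ => ⟨x, hx.mono (by omega) (by omega), hxu⟩

/-- Compactness of `A^ℤ` (König's lemma). -/
lemma mem_lang_of_forall_mem_centralWords [Finite A] {F : Set (List A)} {n : ℕ} {u : List A}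
    (hu : ∀ M, u ∈ centralWords F n M) : u ∈ lang (XAF F) n := by
  obtain ⟨y, -, hyu⟩ := hu 0
  obtain rfl : u.length = n := hyu ▸ length_readWord y 0 n
  let _ : TopologicalSpace A := ⊥
  have : DiscreteTopology A := ⟨rfl⟩
  let K : ℕ → Set (ℤ → A) := fun M => {x | AvoidsOn F (-M) M x} ∩ {x | readWord x 0 u.length = u}
  have hclosed : ∀ M, IsClosed (K M) := fun M =>
    (isClosed_setOf_avoidsOn F _ _).inter (isClopen_setOf_readWord_eq 0 _ u).isClosed
  obtain ⟨x, hx⟩ := IsCompact.nonempty_iInter_of_sequence_nonempty_isCompact_isClosed K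
    (fun M y hy => ⟨hy.1.mono (by omega) (by omega), hy.2⟩) (fun M => hu M)
    (hclosed 0).isCompact hclosed
  simp only [Set.mem_iInter] at hx
  exact ⟨rfl, x, mem_XAF_of_forall_avoidsOn fun M => (hx M).1,
    occursIn_iff_exists_readWord.2 ⟨0, (hx 0).2⟩⟩

lemma eventually_centralWords_subset_lang [Finite A] (F : Set (List A)) (n : ℕ) :
    ∀ᶠ M in atTop, centralWords F n M ⊆ lang (XAF F) n := by
  have hmem : ∀ u ∈ {u : List A | u.length = n}, ∀ᶠ M in atTop,
      u ∈ centralWords F n M → u ∈ lang (XAF F) n := by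
    intro u _
    by_cases hu : ∀ M, u ∈ centralWords F n M
    · exact Eventually.of_forall fun _ _ => mem_lang_of_forall_mem_centralWords hu
    · obtain ⟨M₀, hM₀⟩ := not_forall.1 hu
      exact eventually_atTop.2 ⟨M₀, fun M hM huM => absurd (centralWords_anti F n hM huM) hM₀⟩
  filter_upwards [(eventually_all_finite (List.finite_length_eq A n)).2 hmem] with M hM u hu
  refine hM u ?_ hu
  obtain ⟨x, -, rfl⟩ := hu
  exact length_readWord x 0 n

end Words

section Window

variable {A : Type*}

def extendWindow (a₀ : A) (s : Finset ℤ) (c : s → A) : ℤ → A :=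
  fun i => if h : i ∈ s then c ⟨i, h⟩ else a₀

noncomputable def windowSupp (s : Finset ℤ) (q : ℤ) (k : ℕ) : Finset s :=
  (Finset.Ico q (q + k)).subtype (· ∈ s)

lemma readWord_extendWindow_eq_iff {a₀ : A} {s : Finset ℤ} {c c' : s → A} {q : ℤ} {k : ℕ} :
    readWord (extendWindow a₀ s c) q k = readWord (extendWindow a₀ s c') q k ↔
      ∀ i ∈ windowSupp s q k, c i = c' i := by
  simp only [readWord_eq_readWord_iff, windowSupp, Finset.mem_subtype, Finset.mem_Ico]
  refine ⟨fun h i hi => ?_, fun h i hqi hik => ?_⟩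
  · simpa [extendWindow, i.2] using h i hi.1 hi.2
  · unfold extendWindow
    split_ifs with hi
    exacts [h ⟨i, hi⟩ ⟨hqi, hik⟩, rfl]

lemma card_windowSupp {s : Finset ℤ} {q : ℤ} {k : ℕ} (h : Finset.Ico q (q + k) ⊆ s) :
    (windowSupp s q k).card = k := by
  rw [windowSupp, Finset.card_subtype, Finset.filter_true_of_mem fun i hi => h hi, Int.card_Ico]
  omega

lemma disjoint_windowSupp {s : Finset ℤ} {p q : ℤ} {m k : ℕ} (h : ¬ (q < p + m ∧ p < q + k)) :
    Disjoint (windowSupp s p m) (windowSupp s q k) := by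
  rw [Finset.disjoint_left]
  simp only [windowSupp, Finset.mem_subtype, Finset.mem_Ico]
  omega

lemma finite_setOf_occurrences [Finite A] (F : Set (List A)) (a b : ℤ) :
    {e : List A × ℤ | e.1 ∈ F ∧ a ≤ e.2 ∧ e.2 + e.1.length ≤ b}.Finite :=
  ((List.finite_length_le A (b - a).toNat).prod (Set.finite_Icc a b)).subset
    fun e ⟨_, hae, heb⟩ => ⟨show e.1.length ≤ (b - a).toNat by omega, hae, by omega⟩

noncomputable def windowEvents [Finite A] (F : Set (List A)) (a b : ℤ) : Finset (List A × ℤ) :=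
  (finite_setOf_occurrences F a b).toFinset

lemma mem_windowEvents [Finite A] {F : Set (List A)} {a b : ℤ} {e : List A × ℤ} :
    e ∈ windowEvents F a b ↔ e.1 ∈ F ∧ a ≤ e.2 ∧ e.2 + e.1.length ≤ b :=
  Set.Finite.mem_toFinset _

def Overlaps (q : ℤ) (k : ℕ) (e : List A × ℤ) : Prop :=
  q < e.2 + e.1.length ∧ e.2 < q + k

instance (q : ℤ) (k : ℕ) : DecidablePred (Overlaps (A := A) q k) :=
  fun _ => inferInstanceAs (Decidable (_ ∧ _))

lemma card_filter_overlaps_fst_eq_le [DecidableEq A] (E : Finset (List A × ℤ)) (q : ℤ) (k : ℕ)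
    {w : List A} (hw : 1 ≤ w.length) :
    ((E.filter (Overlaps q k)).filter (·.1 = w)).card ≤ k + (w.length - 1) := by
  have := Finset.card_le_card_of_injOn Prod.snd (s := (E.filter (Overlaps q k)).filter (·.1 = w))
    (t := Finset.Ico (q + 1 - w.length) (q + k)) (fun e he => ?_) (fun e he e' he' h => ?_)
  · rw [Int.card_Ico] at this; omega
  · simp only [Finset.coe_filter, Finset.mem_filter, Set.mem_ofPred_eq] at he
    obtain ⟨⟨-, hov⟩, rfl⟩ := he
    simp only [Finset.coe_Ico, Set.mem_Ico]
    exact ⟨by unfold Overlaps at hov; omega, hov.2⟩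
  · simp only [Finset.coe_filter, Set.mem_ofPred_eq] at he he'
    exact Prod.ext (he.2.trans he'.2.symm) h

end Window

section Weights

lemma exp_neg_two_mul_le_one_sub {y : ℝ} (h0 : 0 ≤ y) (h1 : y ≤ 1 / 2) :
    Real.exp (-(2 * y)) ≤ 1 - y := by
  have hpos : 0 < 1 + 2 * y := by linarith
  rw [Real.exp_neg, inv_le_iff_one_le_mul₀ (Real.exp_pos _)]
  calc (1 : ℝ) ≤ (1 - y) * (1 + 2 * y) := by nlinarith
    _ ≤ (1 - y) * Real.exp (2 * y) := by
        gcongr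
        · linarith
        · linarith [Real.add_one_le_exp (2 * y)]

lemma sub_one_mul_two_thirds_pow_le (m : ℕ) : ((m : ℝ) - 1) * (2 / 3) ^ m ≤ 3 / 5 := by
  induction m with
  | zero => norm_num
  | succ m ih =>
    rcases lt_or_ge m 3 with hm | hm
    · interval_cases m <;> norm_num
    · have hm' : (3 : ℝ) ≤ m := by exact_mod_cast hm
      calc ((m + 1 : ℕ) - 1 : ℝ) * (2 / 3) ^ (m + 1) = 2 / 3 * m * (2 / 3) ^ m := by
            push_cast; ring
        _ ≤ ((m : ℝ) - 1) * (2 / 3) ^ m := by gcongr; linarith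
        _ ≤ 3 / 5 := ih

lemma two_div_pow_le {N : ℝ} (hN : 0 ≤ N) {m : ℕ} (hm : 1 ≤ m) :
    (2 / N) ^ m ≤ 2 / 3 * (3 / N) ^ m := by
  rw [show 2 / N = 2 / 3 * (3 / N) by ring, mul_pow]
  gcongr
  simpa using pow_le_of_le_one (a := (2 / 3 : ℝ)) (by norm_num) (by norm_num) (by omega : m ≠ 0)

lemma natCast_mul_two_div_pow_le {N : ℝ} (hN : 0 ≤ N) (k : ℕ) {m : ℕ} (hm : 1 ≤ m) :
    ((k + (m - 1) : ℕ) : ℝ) * (2 / N) ^ m ≤ (2 / 3 * k + 3 / 5) * (3 / N) ^ m := by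
  have hr : 0 ≤ (3 / N) ^ m := by positivity
  have hmul := mul_le_mul_of_nonneg_right (sub_one_mul_two_thirds_pow_le m) hr
  have hk := mul_le_mul_of_nonneg_left (two_div_pow_le hN hm) (Nat.cast_nonneg (α := ℝ) k)
  rw [show 2 / N = 2 / 3 * (3 / N) by ring, mul_pow] at hk ⊢
  push_cast [Nat.cast_sub hm]
  nlinarith

variable {A : Type*} {N : ℝ} {F : Set (List A)}

lemma two_div_pow_le_of_mem (hN : 0 ≤ N) (hne : [] ∉ F)
    (hF : ∀ G : Finset (List A), ↑G ⊆ F → ∑ w ∈ G, (3 / N) ^ w.length ≤ 1 / 5)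
    {w : List A} (hw : w ∈ F) : (2 / N) ^ w.length ≤ 2 / 15 := by
  classical
  have hsingle := hF {w} (by simpa using hw)
  rw [Finset.sum_singleton] at hsingle
  calc (2 / N) ^ w.length ≤ 2 / 3 * (3 / N) ^ w.length :=
        two_div_pow_le hN (List.length_pos_iff.2 fun h => hne (h ▸ hw))
    _ ≤ 2 / 3 * (1 / 5) := by gcongr
    _ = 2 / 15 := by norm_num

lemma sum_filter_overlaps_le (hN : 0 ≤ N) (hne : [] ∉ F)
    (hF : ∀ G : Finset (List A), ↑G ⊆ F → ∑ w ∈ G, (3 / N) ^ w.length ≤ 1 / 5)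
    {E : Finset (List A × ℤ)} (hE : ∀ e ∈ E, e.1 ∈ F) (q : ℤ) (k : ℕ) :
    ∑ e ∈ E.filter (Overlaps q k), (2 / N) ^ e.1.length ≤ 2 / 15 * k + 3 / 25 := by
  classical
  rw [← Finset.sum_fiberwise_of_maps_to (g := Prod.fst) (t := E.image Prod.fst)
    fun e he => Finset.mem_image_of_mem _ (Finset.mem_filter.1 he).1]
  have hfiber : ∀ w ∈ E.image Prod.fst,
      ∑ e ∈ (E.filter (Overlaps q k)).filter (·.1 = w), (2 / N) ^ e.1.length ≤
        (2 / 3 * k + 3 / 5) * (3 / N) ^ w.length := by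
    intro w hw
    obtain ⟨e₀, he₀, rfl⟩ := Finset.mem_image.1 hw
    have hm : 1 ≤ e₀.1.length := List.length_pos_iff.2 fun h => hne (h ▸ hE e₀ he₀)
    calc ∑ e ∈ (E.filter (Overlaps q k)).filter (·.1 = e₀.1), (2 / N) ^ e.1.length
        = ((E.filter (Overlaps q k)).filter (·.1 = e₀.1)).card * (2 / N) ^ e₀.1.length := by
          rw [Finset.sum_congr rfl fun e he => by rw [(Finset.mem_filter.1 he).2],
            Finset.sum_const, nsmul_eq_mul]
      _ ≤ ((k + (e₀.1.length - 1) : ℕ) : ℝ) * (2 / N) ^ e₀.1.length := by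
          gcongr; exact card_filter_overlaps_fst_eq_le E q k hm
      _ ≤ _ := natCast_mul_two_div_pow_le hN k hm
  have hsum := hF (E.image Prod.fst) fun w hw => by
    obtain ⟨e, he, rfl⟩ := Finset.mem_image.1 (Finset.mem_coe.1 hw)
    exact hE e he
  calc _ ≤ ∑ w ∈ E.image Prod.fst, (2 / 3 * k + 3 / 5) * (3 / N) ^ w.length :=
        Finset.sum_le_sum hfiber
    _ = (2 / 3 * k + 3 / 5) * ∑ w ∈ E.image Prod.fst, (3 / N) ^ w.length := by
        rw [Finset.mul_sum]
    _ ≤ (2 / 3 * k + 3 / 5) * (1 / 5) := by gcongr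
    _ = 2 / 15 * k + 3 / 25 := by ring

lemma exp_le_prod_filter_overlaps (hN : 0 ≤ N) (hne : [] ∉ F)
    (hF : ∀ G : Finset (List A), ↑G ⊆ F → ∑ w ∈ G, (3 / N) ^ w.length ≤ 1 / 5)
    {E : Finset (List A × ℤ)} (hE : ∀ e ∈ E, e.1 ∈ F) (q : ℤ) (k : ℕ) :
    Real.exp (-(4 / 15 * k + 6 / 25)) ≤
      ∏ e ∈ E.filter (Overlaps q k), (1 - (2 / N) ^ e.1.length) := by
  calc Real.exp (-(4 / 15 * k + 6 / 25))
      ≤ Real.exp (-(2 * ∑ e ∈ E.filter (Overlaps q k), (2 / N) ^ e.1.length)) := by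
        gcongr; linarith [sum_filter_overlaps_le hN hne hF hE q k]
    _ = ∏ e ∈ E.filter (Overlaps q k), Real.exp (-(2 * (2 / N) ^ e.1.length)) := by
        rw [← Real.exp_sum, Finset.mul_sum, Finset.sum_neg_distrib]
    _ ≤ _ := Finset.prod_le_prod (fun _ _ => (Real.exp_pos _).le) fun e he =>
        exp_neg_two_mul_le_one_sub (by positivity) ((two_div_pow_le_of_mem hN hne hF
          (hE e (Finset.mem_filter.1 he).1)).trans (by norm_num))

end Weights

section CentralWords

variable {A : Type*} [Fintype A]

lemma one_le_two_pow_mul_exp {m : ℕ} (hm : 1 ≤ m) :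
    1 ≤ (2 : ℝ) ^ m * Real.exp (-(4 / 15 * m + 6 / 25)) := by
  have hlog := Real.log_two_gt_d9
  have hm' : (1 : ℝ) ≤ m := by exact_mod_cast hm
  rw [← Real.exp_log (by positivity : (0 : ℝ) < 2 ^ m), ← Real.exp_add, Real.log_pow]
  exact Real.one_le_exp (by nlinarith)

theorem localLemmaHyp_windowEvents [Nonempty A] (a₀ : A) {F : Set (List A)} (hne : [] ∉ F)
    (hF : ∀ G : Finset (List A), ↑G ⊆ F → ∑ w ∈ G, (3 / Fintype.card A : ℝ) ^ w.length ≤ 1 / 5)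
    (a b : ℤ) :
    LocalLemmaHyp
      (fun e c => readWord (extendWindow a₀ (Finset.Ico a b) c) e.2 e.1.length = e.1)
      (fun e => windowSupp (Finset.Ico a b) e.2 e.1.length)
      (fun e => (windowEvents F a b).filter (Overlaps e.2 e.1.length))
      (fun e => (2 / Fintype.card A : ℝ) ^ e.1.length) (windowEvents F a b) := by
  have hN : (0 : ℝ) < Fintype.card A := Nat.cast_pos.2 Fintype.card_pos
  have hE : ∀ e ∈ windowEvents F a b, e.1 ∈ F := fun e he => (mem_windowEvents.1 he).1
  refine ⟨fun e _ c c' hcc' => ?_, fun e _ c c' hc hc' => ?_, fun e _ => Finset.filter_subset _ _,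
    fun e _ f hf hfe => disjoint_windowSupp fun hov => hfe (Finset.mem_filter.2 ⟨hf, hov⟩),
    fun e _ => by positivity,
    fun e he => (two_div_pow_le_of_mem hN.le hne hF (hE e he)).trans_lt (by norm_num),
    fun e he => ?_⟩
  · rw [readWord_extendWindow_eq_iff.2 hcc']
  · exact readWord_extendWindow_eq_iff.1 (hc.trans hc'.symm)
  · obtain ⟨-, hae, heb⟩ := mem_windowEvents.1 he
    rw [card_windowSupp fun i hi => by simp only [Finset.mem_Ico] at hi ⊢; omega,
      ← mul_pow, div_mul_cancel₀ _ hN.ne']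
    exact (one_le_two_pow_mul_exp (List.length_pos_iff.2 fun h => hne (h ▸ hE e he))).trans
      (by gcongr; exact exp_le_prod_filter_overlaps hN.le hne hF hE _ _)

lemma pow_mul_exp_le_ncard_centralWords [Nonempty A] {F : Set (List A)} (hne : [] ∉ F)
    (hF : ∀ G : Finset (List A), ↑G ⊆ F → ∑ w ∈ G, (3 / Fintype.card A : ℝ) ^ w.length ≤ 1 / 5)
    {n M : ℕ} (hnM : n ≤ M) :
    (Fintype.card A : ℝ) ^ n * Real.exp (-(4 / 15 * n + 6 / 25)) ≤
      (centralWords F n M).ncard := by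
  classical
  set a₀ := Classical.arbitrary A
  set s := Finset.Ico (-M : ℤ) M
  set E := windowEvents F (-M) M
  have hN : (0 : ℝ) ≤ Fintype.card A := Nat.cast_nonneg _
  have hE : ∀ e ∈ E, e.1 ∈ F := fun e he => (mem_windowEvents.1 he).1
  let B : List A × ℤ → (s → A) → Prop := fun e c =>
    readWord (extendWindow a₀ s c) e.2 e.1.length = e.1
  have hcount := (localLemmaHyp_windowEvents a₀ hne hF (-M) M).pow_mul_prod_le_card_image
    (W := windowSupp s 0 n) (Finset.filter_subset (Overlaps 0 n) E)
    (fun f hf hfW => disjoint_windowSupp fun hov => hfW (Finset.mem_filter.2 ⟨hf, hov⟩))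
    (g := fun c => readWord (extendWindow a₀ s c) 0 n)
    fun c c' h => readWord_extendWindow_eq_iff.1 h
  rw [card_windowSupp fun i hi => by simp only [s, Finset.mem_Ico] at hi ⊢; omega] at hcount
  have himage : ↑((avoiders B E).image fun c => readWord (extendWindow a₀ s c) 0 n) ⊆
      centralWords F n M := by
    intro u hu
    obtain ⟨c, hc, rfl⟩ := Finset.mem_image.1 (Finset.mem_coe.1 hu)
    refine ⟨extendWindow a₀ s c, fun w hw p hp hpw => ?_, rfl⟩
    exact mem_avoiders.1 hc (w, p) (mem_windowEvents.2 ⟨hw, hp, hpw⟩)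
  have hfin : (centralWords F n M).Finite := (List.finite_length_eq A n).subset
    fun u ⟨x, _, hxu⟩ => hxu ▸ length_readWord x 0 n
  calc (Fintype.card A : ℝ) ^ n * Real.exp (-(4 / 15 * n + 6 / 25))
      ≤ (Fintype.card A : ℝ) ^ n *
          ∏ e ∈ E.filter (Overlaps 0 n), (1 - (2 / Fintype.card A : ℝ) ^ e.1.length) := by
        gcongr; exact exp_le_prod_filter_overlaps hN hne hF hE 0 n
    _ ≤ _ := hcount
    _ ≤ (centralWords F n M).ncard := by
        exact_mod_cast (Set.ncard_coe_finset _).symm.trans_le (Set.ncard_le_ncard himage hfin)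

theorem pow_mul_exp_le_ncard_lang [Nonempty A] {F : Set (List A)} (hne : [] ∉ F)
    (hF : ∀ G : Finset (List A), ↑G ⊆ F → ∑ w ∈ G, (3 / Fintype.card A : ℝ) ^ w.length ≤ 1 / 5)
    (n : ℕ) :
    (Fintype.card A : ℝ) ^ n * Real.exp (-(4 / 15 * n + 6 / 25)) ≤ (lang (XAF F) n).ncard := by
  obtain ⟨M, hsub, hnM⟩ :=
    ((eventually_centralWords_subset_lang F n).and (eventually_ge_atTop n)).exists
  have hfin : (lang (XAF F) n).Finite := (List.finite_length_eq A n).subset fun u hu => hu.1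
  exact (pow_mul_exp_le_ncard_centralWords hne hF hnM).trans
    (by exact_mod_cast Set.ncard_le_ncard hsub hfin)

end CentralWords

lemma sum_pow_length_le_of_tsum_lt {A : Type*} [Finite A] {F : Set (List A)} (hne : [] ∉ F)
    {r c : ℝ} (hr : 0 ≤ r)
    (hsum : ∑' n : ℕ, (cardLen F (n + 1) : ℝ≥0∞) * ENNReal.ofReal (r ^ (n + 1)) <
      ENNReal.ofReal c)
    (G : Finset (List A)) (hG : ↑G ⊆ F) : ∑ w ∈ G, r ^ w.length ≤ c := by
  classical
  have hlen : ∀ w ∈ G, w.length - 1 + 1 = w.length := fun w hw =>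
    Nat.sub_add_cancel (List.length_pos_iff.2 fun h => hne (h ▸ hG hw))
  have hcard : ∀ n, (G.filter (·.length - 1 = n)).card ≤ cardLen F (n + 1) := fun n => by
    rw [cardLen, ← Set.ncard_coe_finset]
    refine Set.ncard_le_ncard (fun w hw => ?_)
      ((List.finite_length_eq A (n + 1)).subset Set.inter_subset_right)
    obtain ⟨hwG, rfl⟩ := Finset.mem_filter.1 (Finset.mem_coe.1 hw)
    exact ⟨hG hwG, (hlen w hwG).symm⟩
  have hle : ENNReal.ofReal (∑ w ∈ G, r ^ w.length) ≤
      ∑' n : ℕ, (cardLen F (n + 1) : ℝ≥0∞) * ENNReal.ofReal (r ^ (n + 1)) := by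
    rw [ENNReal.ofReal_sum_of_nonneg fun _ _ => by positivity,
      ← Finset.sum_fiberwise_of_maps_to (g := (·.length - 1)) (t := G.image (·.length - 1))
        fun w hw => Finset.mem_image_of_mem _ hw]
    refine (Finset.sum_le_sum fun n _ => ?_).trans (ENNReal.sum_le_tsum _)
    rw [Finset.sum_congr rfl fun w hw => by
      rw [← hlen w (Finset.mem_filter.1 hw).1, (Finset.mem_filter.1 hw).2],
      Finset.sum_const, nsmul_eq_mul]
    gcongr
    exact_mod_cast hcard n
  exact (ENNReal.ofReal_lt_ofReal_iff'.1 (hle.trans_lt hsum)).1.le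

lemma log_sub_le_of_entropyIs {A : Type*} {X : Set (ℤ → A)} {h C c d : ℝ} (hC : 0 < C)
    (hX : entropyIs X h) (hlang : ∀ n : ℕ, C ^ n * Real.exp (-(c * n + d)) ≤ (lang X n).ncard) :
    Real.log C - c ≤ h := by
  have hlim : Tendsto (fun n : ℕ => Real.log C - c - d / n) atTop (nhds (Real.log C - c)) := by
    simpa using tendsto_const_nhds.sub (tendsto_const_div_atTop_nhds_zero_nat d)
  refine le_of_tendsto_of_tendsto hlim hX (eventually_gt_atTop 0 |>.mono fun n hn => ?_)
  have hn' : (0 : ℝ) < n := by exact_mod_cast hn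
  have hpos : 0 < C ^ n * Real.exp (-(c * n + d)) := by positivity
  rw [le_div_iff₀ hn']
  calc (Real.log C - c - d / n) * n = Real.log (C ^ n * Real.exp (-(c * n + d))) := by
        rw [Real.log_mul (by positivity) (Real.exp_pos _).ne', Real.log_pow, Real.log_exp]
        field_simp
        ring
    _ ≤ Real.log (lang X n).ncard := Real.log_le_log hpos (hlang n)

lemma log_three_mul_div_five_lt {N : ℝ} (hN : 0 < N) :
    Real.log (3 * N / 5) < Real.log N - 4 / 15 := by
  have h53 : Real.log 2 ≤ 2 * Real.log (5 / 3) := by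
    rw [← Real.log_rpow (by norm_num)]
    exact Real.log_le_log (by norm_num) (by norm_num)
  rw [show 3 * N / 5 = N / (5 / 3) by ring, Real.log_div hN.ne' (by norm_num)]
  linarith [Real.log_two_gt_d9]

/-- explicit entropy lower bound `h(X) > log(3|A|/5)`. -/
theorem entropy_gt_of_small_forbidden_list
    {A : Type} [Fintype A] [Nonempty A]
    (F : Set (List A)) (hFne : [] ∉ F)
    (hsum : ∑' n : ℕ, (cardLen F (n + 1) : ℝ≥0∞) *
        ENNReal.ofReal ((3 / (Fintype.card A : ℝ)) ^ (n + 1)) < ENNReal.ofReal (1 / 5)) :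
    ∀ hX : ℝ, entropyIs (XAF F) hX →
      Real.log (3 * (Fintype.card A : ℝ) / 5) < hX := by
  intro hX hent
  have hN : (0 : ℝ) < Fintype.card A := Nat.cast_pos.2 Fintype.card_pos
  have hF := sum_pow_length_le_of_tsum_lt hFne (by positivity) hsum
  have hlower := log_sub_le_of_entropyIs hN hent (pow_mul_exp_le_ncard_lang hFne hF)
  linarith [log_three_mul_div_five_lt hN]

end SlowForbidden
end
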